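/- Let d ∈ ℕ, let M be a symmetric positive definite d×d real matrix, and let i ∈ {1,…,d+1}. For y ∈ ℝ^{i−1} define ψ(y) = ∫_{ℝ^{d−i+1}} exp(−(1/2)·(−y, x)ᵀ M (−y, x)) dx, where (−y, x) ∈ ℝ^d denotes the vector whose first i−1 coordinates are −y¹,…,−y^{i−1} and whose remaining d−i+1 coordinates are those of x (for i = d+1 the integral is absent and ψ(y) = exp(−(1/2)yᵀMy)). Then there exist constants C, c > 0 such that for all y, w ∈ ℝ^{i−1}: |ψ(y) − ψ(w)| ≤ C·e^{−c·min(|y|², |w|²)}·(|y−w| + |y−w|²). -/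

import Mathlib

/-!
Positive definiteness makes the form coercive, `λ‖z‖² ≤ zᵀMz`, by compactness of the unit sphere.
For the Gaussian `G z = exp (-zᵀMz / 2)`, the bound `|eᵖ - e^q| ≤ |p - q| e^{max p q}` together with
`|zᵀMz - z'ᵀMz'| ≤ ‖M‖ ‖z - z'‖ (‖z‖ + ‖z'‖)` gives
`|G z - G z'| ≤ C ‖z - z'‖ (1 + ‖z - z'‖) exp (-λ/4 · min (‖z‖², ‖z'‖²))`:
the linear factor `‖z‖` is absorbed by half of the Gaussian decay.
For `z = (-y, x)` and `z' = (-w, x)` the minimum splits as `min (|y|², |w|²) + |x|²`,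
and the remaining factor `exp (-λ|x|²/4)` is integrable in `x`.
-/

open Matrix MeasureTheory

/-- The coefficient function `ψ(y)`: the integral over `x ∈ ℝ^k` of the Gaussian
kernel `exp(-(1/2) zᵀ M z)` evaluated at the concatenated vector `z = (-y, x) ∈ ℝ^{m+k}`
(for `k = 0`, this is just `exp(-(1/2) yᵀ M y)`). -/
noncomputable def psiFun {m k : ℕ} (M : Matrix (Fin (m + k)) (Fin (m + k)) ℝ)
    (y : Fin m → ℝ) : ℝ :=
  ∫ x : Fin k → ℝ,
    Real.exp (-(1 / 2) * (Fin.append (fun j => -(y j)) x ⬝ᵥ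
      M.mulVec (Fin.append (fun j => -(y j)) x)))

theorem abs_exp_sub_exp_le (p q : ℝ) :
    |Real.exp p - Real.exp q| ≤ |p - q| * Real.exp (max p q) := by
  wlog hqp : q ≤ p generalizing p q
  · rw [abs_sub_comm, abs_sub_comm p, max_comm]
    exact this q p (le_of_not_ge hqp)
  have hexp : Real.exp p * (q - p + 1) ≤ Real.exp q := by
    calc Real.exp p * (q - p + 1) ≤ Real.exp p * Real.exp (q - p) :=
          mul_le_mul_of_nonneg_left (Real.add_one_le_exp _) (Real.exp_pos p).le
      _ = Real.exp q := by rw [← Real.exp_add]; ring_nf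
  rw [max_eq_left hqp, abs_of_nonneg (sub_nonneg.2 (Real.exp_le_exp.2 hqp)),
    abs_of_nonneg (sub_nonneg.2 hqp)]
  linarith

theorem mul_exp_neg_two_mul_sq_le {α : ℝ} (hα : 0 < α) (t : ℝ) :
    t * Real.exp (-(2 * α) * t ^ 2) ≤ (√α)⁻¹ * Real.exp (-α * t ^ 2) := by
  have hs : 0 < √α := Real.sqrt_pos.2 hα
  have h1 : √α * t ≤ Real.exp (α * t ^ 2) := by
    nlinarith [sq_nonneg (√α * t - 1), Real.sq_sqrt hα.le, Real.add_one_le_exp (α * t ^ 2)]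
  calc t * Real.exp (-(2 * α) * t ^ 2)
      = (√α)⁻¹ * (√α * t) * Real.exp (-(2 * α) * t ^ 2) := by field_simp
    _ ≤ (√α)⁻¹ * Real.exp (α * t ^ 2) * Real.exp (-(2 * α) * t ^ 2) := by gcongr
    _ = (√α)⁻¹ * Real.exp (-α * t ^ 2) := by rw [mul_assoc, ← Real.exp_add]; ring_nf

section BilinearForm

variable {E : Type*}

theorem norm_add_norm_le_two_mul_min_add [SeminormedAddCommGroup E] (u v : E) :
    ‖u‖ + ‖v‖ ≤ 2 * min ‖u‖ ‖v‖ + ‖u - v‖ := by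
  have := abs_le.1 (abs_norm_sub_norm_le u v)
  rcases le_total ‖u‖ ‖v‖ with h | h
  · rw [min_eq_left h]; linarith
  · rw [min_eq_right h]; linarith

theorem ContinuousLinearMap.abs_apply_self_sub_apply_self_le [SeminormedAddCommGroup E]
    [NormedSpace ℝ E] (B : E →L[ℝ] E →L[ℝ] ℝ) (u v : E) :
    |B u u - B v v| ≤ ‖B‖ * ‖u - v‖ * (‖u‖ + ‖v‖) := by
  have h : B u u - B v v = B (u - v) u + B v (u - v) := by
    rw [map_sub, map_sub, _root_.sub_apply]; ring
  rw [h]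
  calc |B (u - v) u + B v (u - v)| ≤ ‖B (u - v) u‖ + ‖B v (u - v)‖ := abs_add_le _ _
    _ ≤ ‖B‖ * ‖u - v‖ * ‖u‖ + ‖B‖ * ‖v‖ * ‖u - v‖ :=
      add_le_add (B.le_opNorm₂ _ _) (B.le_opNorm₂ _ _)
    _ = _ := by ring

theorem isCoercive_of_apply_self_pos [NormedAddCommGroup E] [NormedSpace ℝ E]
    [FiniteDimensional ℝ E] (B : E →L[ℝ] E →L[ℝ] ℝ) (hB : ∀ u ≠ 0, 0 < B u u) :
    IsCoercive B := by
  rcases subsingleton_or_nontrivial E with hE | hE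
  · exact ⟨1, one_pos, fun u => by simp [Subsingleton.elim u 0]⟩
  obtain ⟨u₀, hu₀, hmin⟩ := (isCompact_sphere (0 : E) 1).exists_isMinOn
    (NormedSpace.sphere_nonempty.2 zero_le_one)
    (by fun_prop : Continuous fun u => B u u).continuousOn
  refine ⟨B u₀ u₀, hB u₀ (ne_zero_of_mem_unit_sphere ⟨u₀, hu₀⟩), fun u => ?_⟩
  rcases eq_or_ne u 0 with rfl | hu
  · simp
  have hnorm : 0 < ‖u‖ := norm_pos_iff.2 hu
  have hsphere : ‖u‖⁻¹ • u ∈ Metric.sphere (0 : E) 1 := by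
    simp [norm_smul, hnorm.ne']
  have hscale : B (‖u‖⁻¹ • u) (‖u‖⁻¹ • u) = (‖u‖ ^ 2)⁻¹ * B u u := by
    rw [map_smul, map_smul, _root_.smul_apply, smul_eq_mul, smul_eq_mul]; ring
  have hle : B u₀ u₀ ≤ (‖u‖ ^ 2)⁻¹ * B u u := hscale ▸ hmin hsphere
  rw [le_inv_mul_iff₀ (by positivity)] at hle
  linarith

theorem abs_exp_neg_half_apply_self_sub_le [SeminormedAddCommGroup E] [NormedSpace ℝ E]
    (B : E →L[ℝ] E →L[ℝ] ℝ) {lam : ℝ} (hlam : 0 < lam)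
    (hB : ∀ u, lam * ‖u‖ * ‖u‖ ≤ B u u) (u v : E) :
    |Real.exp (-(1 / 2) * B u u) - Real.exp (-(1 / 2) * B v v)| ≤
      ‖B‖ * ‖u - v‖ * ((√(lam / 4))⁻¹ + ‖u - v‖) *
        Real.exp (-(lam / 4) * min (‖u‖ ^ 2) (‖v‖ ^ 2)) := by
  set r := min ‖u‖ ‖v‖
  set δ := ‖u - v‖
  have hr : 0 ≤ r := le_min (norm_nonneg u) (norm_nonneg v)
  have hδ : 0 ≤ δ := norm_nonneg _
  have hB0 : 0 ≤ ‖B‖ := norm_nonneg B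
  have hmin_sq : min (‖u‖ ^ 2) (‖v‖ ^ 2) = r ^ 2 := by
    rcases le_total ‖u‖ ‖v‖ with h | h
    · rw [show r = ‖u‖ from min_eq_left h, min_eq_left (pow_le_pow_left₀ (norm_nonneg u) h 2)]
    · rw [show r = ‖v‖ from min_eq_right h, min_eq_right (pow_le_pow_left₀ (norm_nonneg v) h 2)]
  have hmax : max (-(1 / 2) * B u u) (-(1 / 2) * B v v) ≤ -(lam / 2) * r ^ 2 := by
    have hru : r ^ 2 ≤ ‖u‖ ^ 2 := pow_le_pow_left₀ hr (min_le_left _ _) 2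
    have hrv : r ^ 2 ≤ ‖v‖ ^ 2 := pow_le_pow_left₀ hr (min_le_right _ _) 2
    refine max_le ?_ ?_ <;> nlinarith [hB u, hB v]
  have hdiff : |-(1 / 2) * B u u - -(1 / 2) * B v v| ≤ ‖B‖ * δ * (r + δ / 2) := by
    calc |-(1 / 2) * B u u - -(1 / 2) * B v v| = |B u u - B v v| / 2 := by
          rw [← mul_sub, abs_mul, abs_neg, abs_of_pos one_half_pos]; ring
      _ ≤ ‖B‖ * δ * (‖u‖ + ‖v‖) / 2 := by gcongr; exact B.abs_apply_self_sub_apply_self_le u v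
      _ ≤ ‖B‖ * δ * (r + δ / 2) := by
          have := mul_le_mul_of_nonneg_left (norm_add_norm_le_two_mul_min_add u v)
            (mul_nonneg hB0 hδ)
          linarith
  have hr_exp := mul_exp_neg_two_mul_sq_le (α := lam / 4) (by positivity) r
  rw [show 2 * (lam / 4) = lam / 2 by ring] at hr_exp
  have hexp : Real.exp (-(lam / 2) * r ^ 2) ≤ Real.exp (-(lam / 4) * r ^ 2) := by
    gcongr; nlinarith [sq_nonneg r]
  calc |Real.exp (-(1 / 2) * B u u) - Real.exp (-(1 / 2) * B v v)|
      ≤ ‖B‖ * δ * (r + δ / 2) * Real.exp (-(lam / 2) * r ^ 2) :=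
        (abs_exp_sub_exp_le _ _).trans (mul_le_mul hdiff (Real.exp_le_exp.2 hmax)
          (Real.exp_pos _).le (by positivity))
    _ = ‖B‖ * δ * (r * Real.exp (-(lam / 2) * r ^ 2) +
          δ / 2 * Real.exp (-(lam / 2) * r ^ 2)) := by ring
    _ ≤ ‖B‖ * δ * ((√(lam / 4))⁻¹ * Real.exp (-(lam / 4) * r ^ 2) +
          δ * Real.exp (-(lam / 4) * r ^ 2)) :=
        mul_le_mul_of_nonneg_left (add_le_add hr_exp
          (mul_le_mul (by linarith) hexp (Real.exp_pos _).le hδ)) (by positivity)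
    _ = _ := by rw [hmin_sq]; ring

end BilinearForm

section EuclideanSpace

variable {n : Type*} [Fintype n] [DecidableEq n]

noncomputable def Matrix.toEuclideanBilin (M : Matrix n n ℝ) :
    EuclideanSpace ℝ n →L[ℝ] EuclideanSpace ℝ n →L[ℝ] ℝ :=
  ((Matrix.toLinearMap₂' ℝ M).compl₁₂ (WithLp.linearEquiv 2 ℝ (n → ℝ)).toLinearMap
    (WithLp.linearEquiv 2 ℝ (n → ℝ)).toLinearMap).toContinuousBilinearMap

@[simp]
theorem Matrix.toEuclideanBilin_apply (M : Matrix n n ℝ) (u v : EuclideanSpace ℝ n) :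
    M.toEuclideanBilin u v = u.ofLp ⬝ᵥ M *ᵥ v.ofLp := by
  simp [Matrix.toEuclideanBilin, Matrix.toLinearMap₂'_apply']

theorem Matrix.PosDef.isCoercive_toEuclideanBilin {M : Matrix n n ℝ} (hM : M.PosDef) :
    IsCoercive M.toEuclideanBilin :=
  isCoercive_of_apply_self_pos _ fun u hu => by
    simpa using hM.dotProduct_mulVec_pos (x := u.ofLp) (by simpa using hu)

end EuclideanSpace

section Append

variable {m k : ℕ}

theorem norm_toLp_append_sq (a : Fin m → ℝ) (x : Fin k → ℝ) :
    ‖WithLp.toLp 2 (Fin.append a x)‖ ^ 2 = ∑ i, a i ^ 2 + ∑ i, x i ^ 2 := by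
  rw [EuclideanSpace.real_norm_sq_eq, Fin.sum_univ_add]; simp

theorem norm_toLp_append_sub_toLp_append (a b : Fin m → ℝ) (x : Fin k → ℝ) :
    ‖WithLp.toLp 2 (Fin.append a x) - WithLp.toLp 2 (Fin.append b x)‖ =
      √(∑ i, (a i - b i) ^ 2) := by
  rw [EuclideanSpace.norm_eq, Fin.sum_univ_add]; simp

theorem integrable_exp_neg_mul_sum_sq {ι : Type*} [Fintype ι] {c : ℝ} (hc : 0 < c) :
    Integrable fun x : ι → ℝ => Real.exp (-c * ∑ i, x i ^ 2) := by
  simp_rw [Finset.mul_sum, Real.exp_sum]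
  exact Integrable.fintype_prod (f := fun _ t => Real.exp (-c * t ^ 2))
    fun _ => integrable_exp_neg_mul_sq hc

noncomputable def gaussianSlice
    (B : EuclideanSpace ℝ (Fin (m + k)) →L[ℝ] EuclideanSpace ℝ (Fin (m + k)) →L[ℝ] ℝ)
    (a : Fin m → ℝ) (x : Fin k → ℝ) : ℝ :=
  Real.exp (-(1 / 2) * B (WithLp.toLp 2 (Fin.append a x)) (WithLp.toLp 2 (Fin.append a x)))

variable (B : EuclideanSpace ℝ (Fin (m + k)) →L[ℝ] EuclideanSpace ℝ (Fin (m + k)) →L[ℝ] ℝ)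
  {lam : ℝ}

theorem integrable_gaussianSlice (hlam : 0 < lam) (hB : ∀ u, lam * ‖u‖ * ‖u‖ ≤ B u u)
    (a : Fin m → ℝ) : Integrable (gaussianSlice B a) := by
  refine ((integrable_exp_neg_mul_sum_sq (half_pos hlam)).const_mul
    (Real.exp (-(lam / 2) * ∑ i, a i ^ 2))).mono' ?_ (ae_of_all _ fun x => ?_)
  · exact (by unfold gaussianSlice; fun_prop : Continuous (gaussianSlice B a)).aestronglyMeasurable
  · rw [gaussianSlice, Real.norm_of_nonneg (Real.exp_pos _).le, ← Real.exp_add]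
    gcongr
    nlinarith [hB (WithLp.toLp 2 (Fin.append a x)), norm_toLp_append_sq a x]

theorem abs_gaussianSlice_sub_le (hlam : 0 < lam) (hB : ∀ u, lam * ‖u‖ * ‖u‖ ≤ B u u)
    (a b : Fin m → ℝ) (x : Fin k → ℝ) :
    |gaussianSlice B a x - gaussianSlice B b x| ≤
      ‖B‖ * √(∑ i, (a i - b i) ^ 2) * ((√(lam / 4))⁻¹ + √(∑ i, (a i - b i) ^ 2)) *
        Real.exp (-(lam / 4) * min (∑ i, a i ^ 2) (∑ i, b i ^ 2)) *
        Real.exp (-(lam / 4) * ∑ i, x i ^ 2) := by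
  have h := abs_exp_neg_half_apply_self_sub_le B hlam hB (WithLp.toLp 2 (Fin.append a x))
    (WithLp.toLp 2 (Fin.append b x))
  rw [norm_toLp_append_sq, norm_toLp_append_sq, min_add_add_right,
    norm_toLp_append_sub_toLp_append] at h
  refine h.trans_eq ?_
  rw [mul_add (-(lam / 4)), Real.exp_add]
  ring

theorem abs_integral_gaussianSlice_sub_le (hlam : 0 < lam)
    (hB : ∀ u, lam * ‖u‖ * ‖u‖ ≤ B u u) (a b : Fin m → ℝ) :
    |(∫ x, gaussianSlice B a x) - ∫ x, gaussianSlice B b x| ≤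
      ‖B‖ * √(∑ i, (a i - b i) ^ 2) * ((√(lam / 4))⁻¹ + √(∑ i, (a i - b i) ^ 2)) *
        Real.exp (-(lam / 4) * min (∑ i, a i ^ 2) (∑ i, b i ^ 2)) *
        ∫ x : Fin k → ℝ, Real.exp (-(lam / 4) * ∑ i, x i ^ 2) := by
  rw [← integral_sub (integrable_gaussianSlice B hlam hB a)
    (integrable_gaussianSlice B hlam hB b), ← integral_const_mul]
  exact abs_integral_le_integral_abs.trans <|
    integral_mono_of_nonneg (ae_of_all _ fun _ => abs_nonneg _)
      ((integrable_exp_neg_mul_sum_sq (by positivity)).const_mul _)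
      (ae_of_all _ (abs_gaussianSlice_sub_le B hlam hB a b))

end Append

theorem psi_difference_estimate_general (m k : ℕ)
    (M : Matrix (Fin (m + k)) (Fin (m + k)) ℝ) (hM : M.PosDef) :
    ∃ C > 0, ∃ c > 0, ∀ y w : Fin m → ℝ,
      |psiFun M y - psiFun M w| ≤
        C * Real.exp (-c * min (∑ i, y i ^ 2) (∑ i, w i ^ 2)) *
          (Real.sqrt (∑ i, (y i - w i) ^ 2) + ∑ i, (y i - w i) ^ 2) := by
  obtain ⟨lam, hlam, hcoer⟩ := hM.isCoercive_toEuclideanBilin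
  set B := M.toEuclideanBilin
  set C₁ := (√(lam / 4))⁻¹
  set I₀ := ∫ x : Fin k → ℝ, Real.exp (-(lam / 4) * ∑ i, x i ^ 2)
  have hI₀ : 0 ≤ I₀ := integral_nonneg fun _ => (Real.exp_pos _).le
  refine ⟨(‖B‖ + 1) * (C₁ + 1) * (I₀ + 1), by positivity, lam / 4, by positivity, fun y w => ?_⟩
  have hpsi (v : Fin m → ℝ) : psiFun M v = ∫ x, gaussianSlice B (fun j => -(v j)) x := by
    simp [psiFun, gaussianSlice, B]
  have hdist : ∑ i, (-(y i) - -(w i)) ^ 2 = ∑ i, (y i - w i) ^ 2 :=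
    Finset.sum_congr rfl fun i _ => by ring
  have h := abs_integral_gaussianSlice_sub_le B hlam hcoer (fun j => -(y j)) (fun j => -(w j))
  simp only [neg_sq, hdist] at h
  rw [hpsi, hpsi]
  set δ := √(∑ i, (y i - w i) ^ 2)
  rw [← Real.sq_sqrt (Finset.sum_nonneg fun i _ => sq_nonneg (y i - w i))]
  set E := Real.exp (-(lam / 4) * min (∑ i, y i ^ 2) (∑ i, w i ^ 2))
  have hδ : 0 ≤ δ := Real.sqrt_nonneg _
  refine h.trans ?_
  calc ‖B‖ * δ * (C₁ + δ) * E * I₀ = ‖B‖ * I₀ * (C₁ * δ + δ ^ 2) * E := by ring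
    _ ≤ (‖B‖ + 1) * (I₀ + 1) * ((C₁ + 1) * (δ + δ ^ 2)) * E := by
        gcongr
        · linarith
        · linarith
        · nlinarith [mul_nonneg (by positivity : (0 : ℝ) ≤ C₁) (sq_nonneg δ)]
    _ = (‖B‖ + 1) * (C₁ + 1) * (I₀ + 1) * E * (δ + δ ^ 2) := by ring

/-- Lipschitz-type estimate (display (3.16) of the paper) for the coefficient
function `ψ` built from a symmetric positive definite matrix `M` on `ℝ^d`,
`d = m + k`, with `m = i - 1` and `k = d - i + 1`. -/
theorem psi_difference_estimate (m k : ℕ)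
    (M : Matrix (Fin (m + k)) (Fin (m + k)) ℝ) (hsymm : M.IsSymm) (hM : M.PosDef) :
    ∃ C > 0, ∃ c > 0, ∀ y w : Fin m → ℝ,
      |psiFun M y - psiFun M w| ≤
        C * Real.exp (-c * min (∑ i, y i ^ 2) (∑ i, w i ^ 2)) *
          (Real.sqrt (∑ i, (y i - w i) ^ 2) + ∑ i, (y i - w i) ^ 2) :=
  psi_difference_estimate_general m k M hM
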